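/- The Riemann Xi function satisfies Ξ(t) = O(t^A · e^{−πt/4}) as t → ∞ for some positive constant A, where Ξ(t) = ξ(1/2 + it) and ξ(s) = (1/2)·s·(s−1)·π^{−s/2}·Γ(s/2)·ζ(s). -/

import Mathlib

open Real Complex

noncomputable def riemannXiFn (s : ℂ) : ℂ :=
  (1 / 2 : ℂ) * s * (s - 1) * (π : ℂ) ^ (-s / 2) * Complex.Gamma (s / 2) * riemannZeta s

noncomputable def riemannXiCap (t : ℝ) : ℂ :=
  riemannXiFn (1 / 2 + Complex.I * (t : ℂ))

open Set Filter MeasureTheory ComplexConjugate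

/-!
The function `ξ(s) = (s(s-1)Λ₀(s) + 1)/2` is entire, and since `Λ₀` is a Mellin transform it is
bounded on vertical strips, so `ξ` grows at most polynomially there. On the line `Re s = 2` the
zeta factor is bounded and `|Γ(1 + iy)|² = πy / sinh(πy)`, which gives
`|ξ(s)| ≪ (1 + |t|)³ e^{-π|t|/4}`; the functional equation `ξ(1 - s) = ξ(s)` carries this to
`Re s = -1`. The Phragmén–Lindelöf principle on the strip `-1 ≤ Re z ≤ 2`, applied to
`ξ(z) e^{-iπz/4} / (z + 3)³`, then bounds `ξ` on the critical line by `(1 + |t|)³ e^{-π|t|/4}`.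
-/

theorem Real.div_sinh_le {x : ℝ} (hx : 0 < x) : x / sinh x ≤ (1 + 2 * x) * rexp (-x) := by
  have hsinh : 0 < sinh x := sinh_pos_iff.mpr hx
  have hexp : (1 + 2 * x) * rexp (-(2 * x)) ≤ 1 := by
    rw [Real.exp_neg, ← div_eq_mul_inv, div_le_one (exp_pos _)]
    linarith [add_one_le_exp (2 * x)]
  rw [div_le_iff₀ hsinh, sinh_eq]
  have h2 : rexp (-(2 * x)) = rexp (-x) * rexp (-x) := by rw [← Real.exp_add]; ring_nf
  have h1 : rexp (-x) * rexp x = 1 := by rw [← Real.exp_add]; simp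
  nlinarith [exp_pos (-x)]

theorem Complex.norm_Gamma_one_add_mul_I_sq {y : ℝ} (hy : y ≠ 0) :
    ‖Gamma (1 + y * I)‖ ^ 2 = π * y / Real.sinh (π * y) := by
  have hconj : Gamma (1 - y * I) = conj (Gamma (1 + y * I)) := by
    rw [← Gamma_conj]; congr 1; simp [Complex.ext_iff]
  have hyI : (y : ℂ) * I ≠ 0 := by simp [hy]
  have hsinh : (Real.sinh (π * y) : ℂ) ≠ 0 :=
    ofReal_ne_zero.mpr (Real.sinh_ne_zero.mpr (mul_ne_zero Real.pi_ne_zero hy))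
  have hsin : Complex.sin (π * (y * I)) = Real.sinh (π * y) * I := by
    rw [← mul_assoc, ← ofReal_mul, sin_mul_I, ofReal_sinh]
  have hprod : Gamma (1 + y * I) * Gamma (1 - y * I) = (π * y / Real.sinh (π * y) : ℝ) := by
    rw [add_comm, Gamma_add_one _ hyI, mul_assoc, Gamma_mul_Gamma_one_sub, hsin]
    push_cast
    field_simp
  rwa [hconj, mul_conj, normSq_eq_norm_sq, ofReal_inj] at hprod

theorem Complex.norm_Gamma_one_add_mul_I_le (y : ℝ) :
    ‖Gamma (1 + y * I)‖ ≤ (1 + 2 * π * |y|) * rexp (-(π * |y|) / 2) := by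
  have hsq : ‖Gamma (1 + y * I)‖ ^ 2 ≤ (1 + 2 * π * |y|) * rexp (-(π * |y|)) := by
    rcases eq_or_ne y 0 with rfl | hy
    · simp
    have heven : π * y / Real.sinh (π * y) = π * |y| / Real.sinh (π * |y|) := by
      rcases abs_cases y with ⟨h, -⟩ | ⟨h, -⟩ <;> rw [h]
      rw [mul_neg, Real.sinh_neg, neg_div_neg_eq]
    rw [norm_Gamma_one_add_mul_I_sq hy, heven, mul_assoc]
    exact Real.div_sinh_le (by positivity)
  have hexp : rexp (-(π * |y|)) = rexp (-(π * |y|) / 2) ^ 2 := by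
    rw [← Real.exp_nat_mul]; ring_nf
  rw [← pow_le_pow_iff_left₀ (norm_nonneg _) (by positivity) two_ne_zero]
  calc ‖Gamma (1 + y * I)‖ ^ 2 ≤ (1 + 2 * π * |y|) * rexp (-(π * |y|)) := hsq
    _ ≤ (1 + 2 * π * |y|) ^ 2 * rexp (-(π * |y|)) := by
      gcongr; nlinarith [show 0 ≤ 2 * π * |y| by positivity]
    _ = _ := by rw [hexp]; ring

theorem norm_riemannZeta_le_tsum {s : ℂ} (hs : 1 < s.re) :
    ‖riemannZeta s‖ ≤ ∑' n : ℕ, 1 / (n : ℝ) ^ s.re := by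
  have hterm : ∀ n : ℕ, ‖1 / (n : ℂ) ^ s‖ = 1 / (n : ℝ) ^ s.re := by
    intro n
    rcases eq_or_ne n 0 with rfl | hn
    · have hs0 : s ≠ 0 := by rintro rfl; norm_num at hs
      simp [zero_cpow hs0, Real.zero_rpow (by linarith : s.re ≠ 0)]
    · rw [norm_div, norm_one, norm_natCast_cpow_of_pos (Nat.pos_of_ne_zero hn)]
  have hsum : Summable fun n : ℕ ↦ ‖1 / (n : ℂ) ^ s‖ := by
    simpa only [hterm] using Real.summable_one_div_nat_rpow.mpr hs
  rw [zeta_eq_tsum_one_div_nat_cpow hs, ← tsum_congr hterm]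
  exact norm_tsum_le_tsum_norm hsum

theorem norm_mellin_le_of_le_re_le {E : Type*} [NormedAddCommGroup E] [NormedSpace ℂ E]
    {f : ℝ → E} {a b : ℝ} {s : ℂ} (ha : MellinConvergent f a) (hb : MellinConvergent f b)
    (hs : MellinConvergent f s) (has : a ≤ s.re) (hsb : s.re ≤ b) :
    ‖mellin f s‖ ≤ (∫ x in Ioi (0 : ℝ), ‖(x : ℂ) ^ ((a : ℂ) - 1) • f x‖) +
      ∫ x in Ioi (0 : ℝ), ‖(x : ℂ) ^ ((b : ℂ) - 1) • f x‖ := by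
  have hpt : ∀ x ∈ Ioi (0 : ℝ), ‖(x : ℂ) ^ (s - 1) • f x‖ ≤
      ‖(x : ℂ) ^ ((a : ℂ) - 1) • f x‖ + ‖(x : ℂ) ^ ((b : ℂ) - 1) • f x‖ := by
    intro x (hx : 0 < x)
    simp only [norm_smul, norm_cpow_eq_rpow_re_of_pos hx, sub_re, one_re, ofReal_re, ← add_mul]
    gcongr
    rcases le_total x 1 with hx1 | hx1
    · linarith [rpow_le_rpow_of_exponent_ge hx hx1 (by linarith : a - 1 ≤ s.re - 1),
        rpow_nonneg hx.le (b - 1)]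
    · linarith [rpow_le_rpow_of_exponent_le hx1 (by linarith : s.re - 1 ≤ b - 1),
        rpow_nonneg hx.le (a - 1)]
  calc ‖mellin f s‖ ≤ ∫ x in Ioi (0 : ℝ), ‖(x : ℂ) ^ (s - 1) • f x‖ :=
        norm_integral_le_integral_norm _
    _ ≤ ∫ x in Ioi (0 : ℝ), (‖(x : ℂ) ^ ((a : ℂ) - 1) • f x‖ +
          ‖(x : ℂ) ^ ((b : ℂ) - 1) • f x‖) :=
        setIntegral_mono_on hs.norm (ha.norm.add hb.norm) measurableSet_Ioi hpt
    _ = _ := integral_add ha.norm hb.norm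

theorem exists_norm_completedRiemannZeta₀_le (a b : ℝ) :
    ∃ M, ∀ s : ℂ, a ≤ s.re → s.re ≤ b → ‖completedRiemannZeta₀ s‖ ≤ M := by
  let P := HurwitzZeta.hurwitzEvenFEPair 0
  have hP : ∀ w : ℂ, MellinConvergent P.f_modif w :=
    fun w ↦ (P.isStrongFEPair_toStrongFEPair.hasMellin w).1
  refine ⟨((∫ x in Ioi (0 : ℝ), ‖(x : ℂ) ^ (((a / 2 : ℝ) : ℂ) - 1) • P.f_modif x‖) +
      ∫ x in Ioi (0 : ℝ), ‖(x : ℂ) ^ (((b / 2 : ℝ) : ℂ) - 1) • P.f_modif x‖) / 2,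
    fun s has hsb ↦ ?_⟩
  have hre : (s / 2).re = s.re / 2 := by simp
  change ‖P.Λ₀ (s / 2) / 2‖ ≤ _
  rw [norm_div, Complex.norm_two]
  gcongr
  exact norm_mellin_le_of_le_re_le (hP _) (hP _) (hP _) (by rw [hre]; linarith)
    (by rw [hre]; linarith)

theorem PhragmenLindelof.vertical_strip_of_norm_le_exp_exp {f : ℂ → ℂ} {a b B C M : ℝ}
    (hab : b - a < π) (hfd : DiffContOnCl ℂ f (re ⁻¹' Ioo a b))
    (hgrowth : ∀ z : ℂ, z.re ∈ Ioo a b → ‖f z‖ ≤ C * rexp (B * rexp |z.im|))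
    (hle_a : ∀ z : ℂ, z.re = a → ‖f z‖ ≤ M) (hle_b : ∀ z : ℂ, z.re = b → ‖f z‖ ≤ M)
    {z : ℂ} (hza : a ≤ z.re) (hzb : z.re ≤ b) : ‖f z‖ ≤ M := by
  rcases (hza.trans hzb).eq_or_lt with h | hlt
  · exact hle_a z (le_antisymm (h ▸ hzb) hza)
  refine PhragmenLindelof.vertical_strip hfd ⟨1, ?_, B, ?_⟩ hle_a hle_b hza hzb
  · rwa [lt_div_iff₀ (sub_pos.mpr hlt), one_mul]
  · refine Asymptotics.IsBigO.of_bound C ?_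
    rw [eventually_inf_principal]
    refine Eventually.of_forall fun w hw ↦ ?_
    rw [one_mul, Real.norm_of_nonneg (exp_pos _).le]
    exact hgrowth w hw

/-- Entire form of `ξ`: as `s (s - 1) Λ(s) = s (s - 1) Λ₀(s) + 1`, it agrees with `riemannXiFn`
except at `s = 1` and at the poles of `Γ(s / 2)`, where Mathlib's junk values make `riemannXiFn`
vanish. -/
noncomputable def riemannXi (s : ℂ) : ℂ := (s * (s - 1) * completedRiemannZeta₀ s + 1) / 2

theorem differentiable_riemannXi : Differentiable ℂ riemannXi := by
  have := differentiable_completedZeta₀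
  unfold riemannXi; fun_prop

theorem riemannXi_one_sub (s : ℂ) : riemannXi (1 - s) = riemannXi s := by
  unfold riemannXi; rw [completedRiemannZeta₀_one_sub]; ring

theorem riemannXiFn_eq_riemannXi {s : ℂ} (hs : 0 < s.re) (hs1 : s ≠ 1) :
    riemannXiFn s = riemannXi s := by
  have hs0 : s ≠ 0 := by rintro rfl; simp at hs
  have hΓ : Gammaℝ s ≠ 0 := Gammaℝ_ne_zero_of_re_pos hs
  have hs1' : 1 - s ≠ 0 := sub_ne_zero.mpr (Ne.symm hs1)
  have hΛ : riemannXiFn s = s * (s - 1) * completedRiemannZeta s / 2 := by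
    rw [riemannXiFn, mul_assoc _ (_ ^ _), ← Gammaℝ_def, riemannZeta_def_of_ne_zero hs0]
    field_simp
  rw [hΛ, riemannXi, completedRiemannZeta_eq]
  field_simp
  ring

theorem norm_Gamma_half_le_of_re_eq_two {s : ℂ} (hs : s.re = 2) :
    ‖Gamma (s / 2)‖ ≤ 4 * (1 + |s.im|) * rexp (-(π * |s.im|) / 4) := by
  have hs2 : s / 2 = 1 + ((s.im / 2 : ℝ) : ℂ) * I := by
    apply Complex.ext <;> simp [hs]
  have hu2 : |s.im / 2| = |s.im| / 2 := by rw [abs_div, abs_two]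
  calc ‖Gamma (s / 2)‖ ≤ (1 + 2 * π * (|s.im| / 2)) * rexp (-(π * (|s.im| / 2)) / 2) := by
        simpa only [hs2, hu2] using norm_Gamma_one_add_mul_I_le (s.im / 2)
    _ ≤ 4 * (1 + |s.im|) * rexp (-(π * |s.im|) / 4) := by
        rw [show -(π * (|s.im| / 2)) / 2 = -(π * |s.im|) / 4 by ring]
        gcongr
        nlinarith [pi_lt_four, abs_nonneg s.im]

theorem exists_norm_riemannXi_le_of_re_eq_two :
    ∃ K, 0 ≤ K ∧ ∀ s : ℂ, s.re = 2 →
      ‖riemannXi s‖ ≤ K * (1 + |s.im|) ^ 3 * rexp (-(π * |s.im|) / 4) := by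
  set Z := ∑' n : ℕ, 1 / (n : ℝ) ^ (2 : ℝ)
  refine ⟨4 * Z, by positivity, fun s hs ↦ ?_⟩
  rw [← riemannXiFn_eq_riemannXi (by norm_num [hs]) (by rintro rfl; norm_num at hs)]
  have hΓ := norm_Gamma_half_le_of_re_eq_two hs
  set u := |s.im|
  have hZ : ‖riemannZeta s‖ ≤ Z := by
    have := norm_riemannZeta_le_tsum (s := s) (by rw [hs]; norm_num)
    rwa [hs] at this
  have hs_norm : ‖s‖ ≤ 2 * (1 + u) := by
    have := Complex.norm_le_abs_re_add_abs_im s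
    rw [hs, abs_two] at this
    linarith [abs_nonneg s.im]
  have hs1_norm : ‖s - 1‖ ≤ 1 + u := by
    have := Complex.norm_le_abs_re_add_abs_im (s - 1)
    rwa [sub_re, sub_im, hs, one_re, one_im, sub_zero, show (2 : ℝ) - 1 = 1 by norm_num,
      abs_one] at this
  have hpi : ‖(π : ℂ) ^ (-s / 2)‖ ≤ 1 := by
    rw [norm_cpow_eq_rpow_re_of_pos pi_pos]
    exact rpow_le_one_of_one_le_of_nonpos (by linarith [pi_gt_three]) (by simp [hs])
  calc ‖riemannXiFn s‖
      = 1 / 2 * ‖s‖ * ‖s - 1‖ * ‖(π : ℂ) ^ (-s / 2)‖ * ‖Gamma (s / 2)‖ * ‖riemannZeta s‖ := by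
        simp [riemannXiFn]
    _ ≤ 1 / 2 * (2 * (1 + u)) * (1 + u) * 1 * (4 * (1 + u) * rexp (-(π * u) / 4)) * Z := by
        gcongr
    _ = 4 * Z * (1 + u) ^ 3 * rexp (-(π * u) / 4) := by ring

theorem exists_norm_riemannXi_le_one_add_norm_sq (a b : ℝ) :
    ∃ C, ∀ s : ℂ, a ≤ s.re → s.re ≤ b → ‖riemannXi s‖ ≤ C * (1 + ‖s‖) ^ 2 := by
  obtain ⟨M, hM⟩ := exists_norm_completedRiemannZeta₀_le a b
  refine ⟨|M| + 1, fun s has hsb ↦ ?_⟩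
  have hΛ : ‖completedRiemannZeta₀ s‖ ≤ |M| := (hM s has hsb).trans (le_abs_self M)
  have hs1 : ‖s - 1‖ ≤ 1 + ‖s‖ := by linarith [norm_sub_le s 1, norm_one (α := ℂ)]
  have h1 : (1 : ℝ) ≤ (1 + ‖s‖) ^ 2 := one_le_pow₀ (by linarith [norm_nonneg s])
  have hprod : ‖s * (s - 1) * completedRiemannZeta₀ s‖ ≤ (1 + ‖s‖) ^ 2 * |M| := by
    rw [norm_mul, norm_mul, sq]
    gcongr
    linarith
  calc ‖riemannXi s‖ ≤ (‖s * (s - 1) * completedRiemannZeta₀ s‖ + 1) / 2 := by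
        rw [riemannXi, norm_div, Complex.norm_two]
        gcongr
        exact (norm_add_le _ _).trans_eq (by rw [norm_one])
    _ ≤ (|M| + 1) * (1 + ‖s‖) ^ 2 := by nlinarith [abs_nonneg M]

/-- The exponential factor has modulus `e^{π Im z / 4}`, cancelling the decay of `ξ` on the edges of
the strip, and the cube absorbs the polynomial factor `(1 + |Im z|)³`. -/
noncomputable def weightedRiemannXi (z : ℂ) : ℂ :=
  riemannXi z * cexp (-(π * I * z / 4)) / (z + 3) ^ 3

theorem norm_weightedRiemannXi (z : ℂ) :
    ‖weightedRiemannXi z‖ = ‖riemannXi z‖ * rexp (π * z.im / 4) / ‖z + 3‖ ^ 3 := by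
  rw [weightedRiemannXi, norm_div, norm_mul, Complex.norm_exp, norm_pow]
  congr 3
  simp
  ring

theorem two_le_norm_add_three {z : ℂ} (hz : -1 ≤ z.re) : 2 ≤ ‖z + 3‖ := by
  refine le_trans ?_ (re_le_norm _)
  simp only [add_re, re_ofNat]
  linarith

theorem diffContOnCl_weightedRiemannXi :
    DiffContOnCl ℂ weightedRiemannXi (re ⁻¹' Ioo (-1) 2) := by
  refine DifferentiableOn.diffContOnCl fun z hz ↦ ?_
  rw [closure_preimage_re, closure_Ioo (by norm_num)] at hz
  have hz3 : (z + 3) ^ 3 ≠ 0 :=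
    pow_ne_zero _ (norm_pos_iff.mp ((two_le_norm_add_three hz.1).trans_lt' two_pos))
  exact (((differentiable_riemannXi z).mul (by fun_prop)).div (by fun_prop)
    hz3).differentiableWithinAt

theorem exists_norm_weightedRiemannXi_le_of_re_eq :
    ∃ M, ∀ z : ℂ, (z.re = -1 ∨ z.re = 2) → ‖weightedRiemannXi z‖ ≤ M := by
  obtain ⟨K, hK0, hK⟩ := exists_norm_riemannXi_le_of_re_eq_two
  refine ⟨8 * K, fun z hz ↦ ?_⟩
  have hedge : ‖riemannXi z‖ ≤ K * (1 + |z.im|) ^ 3 * rexp (-(π * |z.im|) / 4) := by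
    rcases hz with hz | hz
    · simpa [riemannXi_one_sub] using hK (1 - z) (by simp [hz]; norm_num)
    · exact hK z hz
  have hre : -1 ≤ z.re := by rcases hz with hz | hz <;> norm_num [hz]
  have h2 := two_le_norm_add_three hre
  have him : |z.im| ≤ ‖z + 3‖ := by simpa using abs_im_le_norm (z + 3)
  have hexp : rexp (-(π * |z.im|) / 4) * rexp (π * z.im / 4) ≤ 1 := by
    rw [← Real.exp_add, exp_le_one_iff]
    nlinarith [le_abs_self z.im, pi_pos]
  rw [norm_weightedRiemannXi, div_le_iff₀ (by positivity)]
  calc ‖riemannXi z‖ * rexp (π * z.im / 4)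
      ≤ K * (1 + |z.im|) ^ 3 * rexp (-(π * |z.im|) / 4) * rexp (π * z.im / 4) := by gcongr
    _ ≤ K * (1 + |z.im|) ^ 3 := by
        rw [mul_assoc]; exact mul_le_of_le_one_right (by positivity) hexp
    _ ≤ K * (2 * ‖z + 3‖) ^ 3 := by gcongr; linarith
    _ = 8 * K * ‖z + 3‖ ^ 3 := by ring

theorem exists_norm_weightedRiemannXi_le_exp_exp :
    ∃ C, ∀ z : ℂ, z.re ∈ Ioo (-1) 2 → ‖weightedRiemannXi z‖ ≤ C * rexp (3 * rexp |z.im|) := by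
  obtain ⟨C, hC⟩ := exists_norm_riemannXi_le_one_add_norm_sq (-1) 2
  refine ⟨9 * C, fun z ⟨hz1, hz2⟩ ↦ ?_⟩
  set u := |z.im|
  have hu : 1 + u ≤ rexp u := by linarith [add_one_le_exp u]
  have hξ := hC z hz1.le hz2.le
  have hC0 : 0 ≤ C := nonneg_of_mul_nonneg_left ((norm_nonneg _).trans hξ) (by positivity)
  have hnorm : 1 + ‖z‖ ≤ 3 * rexp u := by
    have hre : |z.re| ≤ 2 := abs_le.mpr ⟨by linarith, by linarith⟩
    have hz : ‖z‖ ≤ |z.re| + u := norm_le_abs_re_add_abs_im z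
    linarith [abs_nonneg z.im]
  have hexp : rexp (π * z.im / 4) ≤ rexp u := by
    gcongr
    nlinarith [le_abs_self z.im, pi_lt_four, pi_pos, abs_nonneg z.im]
  have hden : 1 ≤ ‖z + 3‖ ^ 3 := one_le_pow₀ (by linarith [two_le_norm_add_three hz1.le])
  rw [norm_weightedRiemannXi]
  calc ‖riemannXi z‖ * rexp (π * z.im / 4) / ‖z + 3‖ ^ 3
      ≤ ‖riemannXi z‖ * rexp (π * z.im / 4) := div_le_self (by positivity) hden
    _ ≤ C * (3 * rexp u) ^ 2 * rexp u := by gcongr; exact hξ.trans (by gcongr)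
    _ = 9 * C * rexp (3 * u) := by
        rw [show 3 * u = u + u + u by ring, Real.exp_add, Real.exp_add]; ring
    _ ≤ 9 * C * rexp (3 * rexp u) := by gcongr; linarith

theorem exists_norm_weightedRiemannXi_le :
    ∃ M, ∀ z : ℂ, -1 ≤ z.re → z.re ≤ 2 → ‖weightedRiemannXi z‖ ≤ M := by
  obtain ⟨M, hM⟩ := exists_norm_weightedRiemannXi_le_of_re_eq
  obtain ⟨C, hC⟩ := exists_norm_weightedRiemannXi_le_exp_exp
  exact ⟨M, fun z ↦ PhragmenLindelof.vertical_strip_of_norm_le_exp_exp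
    (by linarith [pi_gt_three]) diffContOnCl_weightedRiemannXi hC
    (fun w hw ↦ hM w (.inl hw)) (fun w hw ↦ hM w (.inr hw))⟩

theorem exists_norm_riemannXi_le_cube_mul_exp_on_strip :
    ∃ M, ∀ z : ℂ, -1 ≤ z.re → z.re ≤ 2 →
      ‖riemannXi z‖ ≤ M * ‖z + 3‖ ^ 3 * rexp (-π * z.im / 4) := by
  obtain ⟨M, hM⟩ := exists_norm_weightedRiemannXi_le
  refine ⟨M, fun z hz1 hz2 ↦ ?_⟩
  have hw := hM z hz1 hz2
  have h3 := two_le_norm_add_three hz1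
  rw [norm_weightedRiemannXi, div_le_iff₀ (by positivity),
    ← le_div_iff₀ (exp_pos _), div_eq_mul_inv, ← Real.exp_neg] at hw
  rwa [neg_mul, neg_div]

theorem Xi_decay_bound :
    ∃ A C T : ℝ, 0 < A ∧ 0 < C ∧ 0 < T ∧
      ∀ t : ℝ, T ≤ t →
        ‖riemannXiCap t‖ ≤ C * t ^ A * Real.exp (-π * t / 4) := by
  obtain ⟨M, hM⟩ := exists_norm_riemannXi_le_cube_mul_exp_on_strip
  refine ⟨3, 125 * max M 1, 1, by norm_num, by positivity, one_pos, fun t ht ↦ ?_⟩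
  set s : ℂ := 1 / 2 + I * t
  have hre : s.re = 1 / 2 := by simp [s]
  have him : s.im = t := by simp [s]
  have hs1 : s ≠ 1 := fun h ↦ by rw [h, one_im] at him; linarith
  have hs3 : ‖s + 3‖ ≤ 5 * t := by
    have := norm_le_abs_re_add_abs_im (s + 3)
    rw [add_re, add_im, hre, him] at this
    norm_num [abs_of_pos (by linarith : (0 : ℝ) < t)] at this
    linarith
  have hξ := hM s (by rw [hre]; norm_num) (by rw [hre]; norm_num)
  rw [← riemannXiFn_eq_riemannXi (by rw [hre]; norm_num) hs1, him] at hξ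
  rw [show t ^ (3 : ℝ) = t ^ 3 by norm_cast]
  calc ‖riemannXiCap t‖ ≤ M * ‖s + 3‖ ^ 3 * rexp (-π * t / 4) := hξ
    _ ≤ max M 1 * (5 * t) ^ 3 * rexp (-π * t / 4) := by gcongr; exact le_max_left M 1
    _ = 125 * max M 1 * t ^ 3 * rexp (-π * t / 4) := by ring
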